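/- Consider the modified Hénon–Heiles kinetic energy K(x,y,p_x,p_y) = (y p_x² + p_y²)/2. For any initial data (x₀,y₀,p_{x0},p_{y0}), the curves x(t) = x₀ + p_{x0}( y₀ t + p_{y0} t²/2 − p_{x0}² t³/12 ), y(t) = y₀ + p_{y0} t − p_{x0}² t²/4, p_x(t) = p_{x0}, p_y(t) = p_{y0} − (p_{x0}²/2) t satisfy Hamilton's equations ẋ = ∂K/∂p_x = y p_x, ẏ = ∂K/∂p_y = p_y, ṗ_x = −∂K/∂x = 0, ṗ_y = −∂K/∂y = −p_x²/2 for all t, and K is constant along this solution: K(x(t),y(t),p_x(t),p_y(t)) = K(x₀,y₀,p_{x0},p_{y0}). Hence the sub-Hamiltonian K has an analytical solution as an explicit function of time. -/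

import Mathlib

/-- The kinetic energy `K(x,y,p_x,p_y) = (y p_x² + p_y²)/2` of the modified
Hénon–Heiles system. -/
noncomputable def Khh (x y px py : ℝ) : ℝ := (y * px ^ 2 + py ^ 2) / 2

section KineticFlow

variable (x0 y0 px0 py0 t : ℝ)

lemma hasDerivAt_kineticFlow_x :
    HasDerivAt (fun t => x0 + px0 * (y0 * t + py0 * t ^ 2 / 2 - px0 ^ 2 * t ^ 3 / 12))
      ((y0 + py0 * t - px0 ^ 2 * t ^ 2 / 4) * px0) t := by
  refine (((((hasDerivAt_id' t).const_mul y0).add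
    (((hasDerivAt_pow 2 t).const_mul py0).div_const 2)).sub
    (((hasDerivAt_pow 3 t).const_mul (px0 ^ 2)).div_const 12)).const_mul px0).const_add x0
    |>.congr_deriv ?_
  ring

lemma hasDerivAt_kineticFlow_y :
    HasDerivAt (fun t => y0 + py0 * t - px0 ^ 2 * t ^ 2 / 4) (py0 - px0 ^ 2 / 2 * t) t := by
  refine ((((hasDerivAt_id' t).const_mul py0).const_add y0).sub
    (((hasDerivAt_pow 2 t).const_mul (px0 ^ 2)).div_const 4)).congr_deriv ?_
  ring

lemma hasDerivAt_kineticFlow_py :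
    HasDerivAt (fun t => py0 - px0 ^ 2 / 2 * t) (-px0 ^ 2 / 2) t := by
  refine (((hasDerivAt_id' t).const_mul (px0 ^ 2 / 2)).const_sub py0).congr_deriv ?_
  ring

lemma Khh_kineticFlow :
    Khh (x0 + px0 * (y0 * t + py0 * t ^ 2 / 2 - px0 ^ 2 * t ^ 3 / 12))
      (y0 + py0 * t - px0 ^ 2 * t ^ 2 / 4) px0 (py0 - px0 ^ 2 / 2 * t) = Khh x0 y0 px0 py0 := by
  unfold Khh
  ring

end KineticFlow

/-- The explicit curves solve Hamilton's equations `ẋ = y p_x`, `ẏ = p_y`, `ṗ_x = 0`,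
`ṗ_y = −p_x²/2` for the sub-Hamiltonian `K`, and `K` is constant along the solution:
the sub-Hamiltonian `K` has an analytical solution as an explicit function of time. -/
theorem henon_heiles_kinetic_explicit_solution (x0 y0 px0 py0 : ℝ)
    (x y px py : ℝ → ℝ)
    (hx : x = fun t => x0 + px0 * (y0 * t + py0 * t ^ 2 / 2 - px0 ^ 2 * t ^ 3 / 12))
    (hy : y = fun t => y0 + py0 * t - px0 ^ 2 * t ^ 2 / 4)
    (hpx : px = fun _ => px0)
    (hpy : py = fun t => py0 - (px0 ^ 2 / 2) * t) :
    ∀ t : ℝ,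
      deriv x t = y t * px t ∧
      deriv y t = py t ∧
      deriv px t = 0 ∧
      deriv py t = -(px t) ^ 2 / 2 ∧
      Khh (x t) (y t) (px t) (py t) = Khh x0 y0 px0 py0 := by
  subst hx hy hpx hpy
  intro t
  exact ⟨(hasDerivAt_kineticFlow_x x0 y0 px0 py0 t).deriv,
    (hasDerivAt_kineticFlow_y y0 px0 py0 t).deriv,
    deriv_const t px0,
    (hasDerivAt_kineticFlow_py px0 py0 t).deriv,
    Khh_kineticFlow x0 y0 px0 py0 t⟩
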